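/- If there exists a set of abstract actions A over a feature subset F' ⊆ F that is sound and complete relative to the sample set S, and the selected features distinguish goal from non-goal expanded states, then the assignment σ setting selected(f) true exactly for f ∈ F', with D1 and D2 set to their defined truth values, satisfies T(S,F). -/

import Mathlib

inductive Change
  | inc | dec | same
deriving DecidableEq

def delta (v v' : ℕ) : Change := if v < v' then .inc else if v' < v then .dec else .same

/-- Qualitative (boolean) value of feature `f` at state `s`: whether its value is 0. -/
def qv {State F : Type} (val : F → State → ℕ) (f : F) (s : State) : Bool :=
  decide (val f s = 0)

def Expanded {State : Type} (S : Set (State × State)) (s : State) : Prop := ∃ s', (s, s') ∈ S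

structure Act (F : Type) where
  pre : F → Option Bool
  eff : F → Option Change

/-- The abstract action `a` is defined only over the features in `sel`. -/
def Over {F : Type} (sel : F → Prop) (a : Act F) : Prop :=
  ∀ f, ¬ sel f → a.pre f = none ∧ a.eff f = none

/-- `a` is applicable in the abstract state of `s`. -/
def App {State F : Type} (val : F → State → ℕ) (a : Act F) (s : State) : Prop :=
  ∀ (f : F) (b : Bool), a.pre f = some b → qv val f s = b

/-- `a` is applicable at `s` and has the same qualitative effects over the selected
features as the transition (s,s'). -/
def Matches {State F : Type} (val : F → State → ℕ) (sel : F → Prop) (a : Act F)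
    (s s' : State) : Prop :=
  App val a s ∧ ∀ f, sel f → (a.eff f).getD .same = delta (val f s) (val f s')

def SoundRel {State F : Type} (val : F → State → ℕ) (S : Set (State × State))
    (sel : F → Prop) (A : Set (Act F)) : Prop :=
  ∀ a ∈ A, ∀ s, Expanded S s → App val a s → ∃ s', (s, s') ∈ S ∧ Matches val sel a s s'

def CompleteRel {State F : Type} (val : F → State → ℕ) (S : Set (State × State))
    (sel : F → Prop) (A : Set (Act F)) : Prop :=
  ∀ p ∈ S, ∃ a ∈ A, Matches val sel a p.1 p.2

/-- Satisfaction of the theory T(S,F) by an assignment (sel, d1, d2):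
clause families (1)-(4). -/
def SatT {State F : Type} (S : Set (State × State)) (goal : State → Prop)
    (val : F → State → ℕ) (sel : F → Prop) (d1 : State → State → Prop)
    (d2 : State → State → State → State → Prop) : Prop :=
  (∀ s t, Expanded S s → Expanded S t →
      (d1 s t ↔ ∃ f, sel f ∧ qv val f s ≠ qv val f t)) ∧
  (∀ s s' t t', (s, s') ∈ S → (t, t') ∈ S →
      (d2 s s' t t' ↔ ∃ f, sel f ∧ qv val f s = qv val f t ∧
          delta (val f s) (val f s') ≠ delta (val f t) (val f t'))) ∧
  (∀ s s' t, (s, s') ∈ S → Expanded S t → ¬ d1 s t →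
      ∃ t', (t, t') ∈ S ∧ ¬ d2 s s' t t') ∧
  (∀ s t, Expanded S s → Expanded S t → (goal s ↔ ¬ goal t) → d1 s t)

open scoped Classical in
/-- The abstract action extracted from transition (s,s') over the selected features. -/
noncomputable def extract {State F : Type} (val : F → State → ℕ) (sel : F → Prop)
    (s s' : State) : Act F :=
  { pre := fun f => if sel f then some (qv val f s) else none,
    eff := fun f => if sel f then some (delta (val f s) (val f s')) else none }

section

variable {State F : Type} {val : F → State → ℕ} {sel : F → Prop}

theorem App.of_qv_eq {a : Act F} {s t : State} (hover : Over sel a) (hs : App val a s)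
    (hst : ∀ f, sel f → qv val f s = qv val f t) : App val a t := by
  intro f b hpre
  by_cases hf : sel f
  · exact hst f hf ▸ hs f b hpre
  · simp [(hover f hf).1] at hpre

theorem Matches.delta_eq {a : Act F} {s s' t t' : State} (h : Matches val sel a s s')
    (h' : Matches val sel a t t') {f : F} (hf : sel f) :
    delta (val f s) (val f s') = delta (val f t) (val f t') :=
  (h.2 f hf).symm.trans (h'.2 f hf)

theorem exists_transition_with_same_effects {S : Set (State × State)} {A : Set (Act F)}
    (hover : ∀ a ∈ A, Over sel a) (hsound : SoundRel val S sel A)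
    (hcomp : CompleteRel val S sel A) {s s' t : State} (hss : (s, s') ∈ S)
    (ht : Expanded S t) (hst : ∀ f, sel f → qv val f s = qv val f t) :
    ∃ t', (t, t') ∈ S ∧ ∀ f, sel f → delta (val f s) (val f s') = delta (val f t) (val f t') := by
  obtain ⟨a, haA, hmatch⟩ := hcomp (s, s') hss
  obtain ⟨t', htt', hmatch'⟩ := hsound a haA t ht (hmatch.1.of_qv_eq (hover a haA) hst)
  exact ⟨t', htt', fun f hf => hmatch.delta_eq hmatch' hf⟩

end

/-- If A over selected features F' is sound and complete relative to S
and the selected features separate goal from non-goal expanded states, then the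
assignment setting selected(f) true exactly for f ∈ F', with D1 and D2 at their
defined truth values, satisfies T(S,F). -/
theorem stmt7 {State F : Type} (S : Set (State × State)) (goal : State → Prop)
    (val : F → State → ℕ) (sel : F → Prop) (A : Set (Act F))
    (hover : ∀ a ∈ A, Over sel a)
    (hsound : SoundRel val S sel A) (hcomp : CompleteRel val S sel A)
    (hgoalsep : ∀ s t, Expanded S s → Expanded S t → (goal s ↔ ¬ goal t) →
      ∃ f, sel f ∧ qv val f s ≠ qv val f t) :
    SatT S goal val sel
      (fun s t => ∃ f, sel f ∧ qv val f s ≠ qv val f t)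
      (fun s s' t t' => ∃ f, sel f ∧ qv val f s = qv val f t ∧
        delta (val f s) (val f s') ≠ delta (val f t) (val f t')) := by
  refine ⟨fun _ _ _ _ => Iff.rfl, fun _ _ _ _ _ _ => Iff.rfl, ?_, hgoalsep⟩
  intro s s' t hss ht hnd1
  push Not at hnd1
  obtain ⟨t', htt', heff⟩ := exists_transition_with_same_effects hover hsound hcomp hss ht hnd1
  exact ⟨t', htt', fun ⟨f, hf, _, hne⟩ => hne (heff f hf)⟩
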